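/- arXiv:1812.03767 — 3 statements merged into one kernel-verified Lean document; each statement's English description precedes it below -/
import Mathlib

section
/- Let ⟨·,·⟩ : F_q × F_q → F be the symmetric F-bilinear form determined by ⟨|m⟩, |m′⟩⟩ = (q;q)_m δ_{m,m′}. Then for all integers i, j ≥ 0 and all u, v ∈ F_q, ⟨G^j_i u, v⟩ = ⟨u, G^i_j v⟩. (That is, G^j_i = ι(G^i_j) for the anti-automorphism ι of the q-boson algebra with ι(a⁺) = a⁻, ι(a⁻) = a⁺, ι(k) = k.) -/
open scoped Classical

noncomputable section

namespace KOY

/-- `F = ℚ(q)`, the field of rational functions in an indeterminate `q` over `ℚ`. -/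
abbrev Fq : Type := RatFunc ℚ

/-- The indeterminate `q`. -/
def q : Fq := RatFunc.X

/-- `[u] = (q^u - q^{-u})/(q - q⁻¹)`. -/
def qint (u : ℤ) : Fq := (q ^ u - q ^ (-u)) / (q - q⁻¹)

/-- `(z; a)_m = ∏_{k=0}^{m-1} (1 - z a^k)`. -/
def poch {R : Type*} [CommRing R] (z a : R) (m : ℕ) : R :=
  ∏ k ∈ Finset.range m, (1 - z * a ^ k)

/-- The `q`-boson Fock space `⊕_{m ≥ 0} F·|m⟩`. -/
abbrev Fock : Type := ℕ →₀ Fq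

/-- creation operator `a⁺ |m⟩ = |m+1⟩`. -/
def aP : Module.End Fq Fock := Finsupp.lift Fock Fq ℕ fun m => Finsupp.single (m + 1) 1

/-- annihilation operator `a⁻ |m⟩ = (1-q^m)|m-1⟩`. -/
def aM : Module.End Fq Fock :=
  Finsupp.lift Fock Fq ℕ fun m => (1 - q ^ m) • Finsupp.single (m - 1) 1

/-- `k |m⟩ = q^m |m⟩`. -/
def kO : Module.End Fq Fock := Finsupp.lift Fock Fq ℕ fun m => q ^ m • Finsupp.single m 1

/-- The operator `G^j_i` for `i, j ≥ 0` (`i` = lower index, `j` = upper index):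
`G^j_i = (-q;q)_{i+j} Σ_{m=0}^{t} ((q^{-t};q)_m (-q^{-t};q)_m / ((q;q)_m (-q^{-s};q)_m))
  (a⁺)^{(j-i)_+} (q^m k^m) (a⁻)^{(i-j)_+}` with `s = i+j`, `t = min i j`. -/
def GopN (i j : ℕ) : Module.End Fq Fock :=
  poch (-q) q (i + j) •
    ∑ m ∈ Finset.range (min i j + 1),
      (poch (q ^ (-(min i j : ℤ))) q m * poch (-q ^ (-(min i j : ℤ))) q m /
          (poch q q m * poch (-q ^ (-((i : ℤ) + j))) q m)) •
        (aP ^ (j - i) * (q ^ m • kO ^ m) * aM ^ (i - j))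

/-- `G^j_i` with the convention that it vanishes for negative indices. -/
def Gop (i j : ℤ) : Module.End Fq Fock :=
  if 0 ≤ i ∧ 0 ≤ j then GopN i.toNat j.toNat else 0

/-- `X_{mm}`: the coefficient of `|m⟩` in `X |m⟩`. -/
def elem (X : Module.End Fq Fock) (m : ℕ) : Fq := X (Finsupp.single m 1) m

/-- `⟨a, b⟩ = ∑_{i<j} a_i b_j` (natural numbers). -/
def innN {n : ℕ} (a b : Fin n → ℕ) : ℕ := ∑ i, ∑ j, if i < j then a i * b j else 0

/-- `⟨a, b⟩ = ∑_{i<j} a_i b_j` (integers). -/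
def innZ {n : ℕ} (a b : Fin n → ℤ) : ℤ := ∑ i, ∑ j, if i < j then a i * b j else 0

/-- `|a| = ∑ a_i`. -/
def asum {k : ℕ} (a : Fin k → ℤ) : ℤ := ∑ i, a i

/-- coercion of arrays to integer arrays. -/
def castZ {n : ℕ} (a : Fin n → ℕ) : Fin n → ℤ := fun i => (a i : ℤ)

/-- The matrix product formula for `K^{(n,l)}(z)^γ_α` as a power series in `t = z⁻¹`:
`q^{⟨γ,α⟩} (q^{-l}t;q)_{l+1} ((q²;q²)_l (-qt;q)_l)⁻¹ Σ_{m≥0} q^{-lm} t^m (G^{γ₁}_{α₁}⋯G^{γₙ}_{αₙ})_{mm}`,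
with coefficients transported along a ring hom `f` from `ℚ(q)`. -/
def KmatPS {K : Type*} [Field K] (f : Fq →+* K) (n l : ℕ) (α γ : Fin n → ℕ) :
    PowerSeries K :=
  PowerSeries.C (R := K) (f (q ^ innN γ α)) *
    poch (PowerSeries.C (R := K) (f (q ^ (-(l : ℤ)))) * PowerSeries.X) (PowerSeries.C (R := K) (f q)) (l + 1) *
    (PowerSeries.C (R := K) (f (poch (q ^ 2) (q ^ 2) l)) *
        poch (PowerSeries.C (R := K) (f (-q)) * PowerSeries.X) (PowerSeries.C (R := K) (f q)) l)⁻¹ *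
    PowerSeries.mk fun m =>
      f (q ^ (-(l * m : ℤ)) * elem (List.ofFn fun i => Gop (α i) (γ i)).prod m)

/-- `F((t))`, the field of formal Laurent series in `t`. -/
abbrev LS : Type := LaurentSeries Fq

/-- `K^{(n,l)}(z)^γ_α ∈ F((t))` (first array = lower index `α`, second = upper index `γ`). -/
def Kmat (n l : ℕ) (α γ : Fin n → ℕ) : LS :=
  HahnSeries.ofPowerSeries ℤ Fq (KmatPS (RingHom.id Fq) n l α γ)

/-- Extension of `Kmat` to integer arrays, vanishing if some entry is negative. -/
def KmatZ (n l : ℕ) (α γ : Fin n → ℤ) : LS :=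
  if (∀ i, 0 ≤ α i) ∧ ∀ i, 0 ≤ γ i then
    Kmat n l (fun i => (α i).toNat) fun i => (γ i).toNat
  else 0

/-- `t ∈ F((t))`. -/
def T : LS := HahnSeries.single (1 : ℤ) (1 : Fq)

/-- the constant embedding `F → F((t))`. -/
def CL : Fq →+* LS := HahnSeries.C

/-- `Φ̄_q(γ|β; λ, μ)` for integer arrays, vanishing unless `0 ≤ γ ≤ β`. -/
def phiBarP {K : Type*} [Field K] (qv lam mu : K) {k : ℕ} (γ β : Fin k → ℤ) : K :=
  if ∀ i, 0 ≤ γ i ∧ γ i ≤ β i then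
    poch lam qv (asum γ).toNat * poch (mu / lam) qv (asum β - asum γ).toNat /
        poch mu qv (asum β).toNat *
      ∏ i, poch qv qv (β i).toNat / (poch qv qv (β i - γ i).toNat * poch qv qv (γ i).toNat)
  else 0

/-- `Φ_q(γ|β; λ, μ) = q^{⟨β-γ,γ⟩} (μ/λ)^{|γ|} Φ̄_q(γ|β; λ, μ)`. -/
def phiP {K : Type*} [Field K] (qv lam mu : K) {k : ℕ} (γ β : Fin k → ℤ) : K :=
  qv ^ innZ (β - γ) γ * (mu / lam) ^ asum γ * phiBarP qv lam mu γ β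

/-- truncation `ᾱ = (α₁, …, α_{n-1})` (as an integer array). -/
def bar {n : ℕ} (a : Fin n → ℕ) : Fin (n - 1) → ℤ :=
  fun i => (a ⟨i.val, by have := i.isLt; omega⟩ : ℤ)

/-- `A^{(l,m)}(z)^{γ,δ}_{α,β}
  = q^{⟨α,β⟩-⟨δ,γ⟩} Σ_{ξ̄+η̄=γ̄+δ̄} Φ_{q²}(ξ̄-δ̄|ξ̄; q^{m-l}z, q^{-l-m}z) Φ_{q²}(η̄|β̄; q^{-l-m}z⁻¹, q^{-2m})`
in any field, for chosen values of `q` and `z`. -/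
def Amat {K : Type*} [Field K] (qv zv : K) {n : ℕ} (l m : ℕ) (γ δ α β : Fin n → ℕ) : K :=
  qv ^ ((innN α β : ℤ) - (innN δ γ : ℤ)) *
    ∑ ξ ∈ Finset.Icc (0 : Fin (n - 1) → ℤ) (bar γ + bar δ),
      phiP (qv ^ 2) (qv ^ ((m : ℤ) - l) * zv) (qv ^ (-(l : ℤ) - m) * zv) (ξ - bar δ) ξ *
        phiP (qv ^ 2) (qv ^ (-(l : ℤ) - m) * zv⁻¹) (qv ^ (-(2 * m : ℤ))) (bar γ + bar δ - ξ)
          (bar β)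

/-- `𝒮(λ,μ)^{γ,δ}_{α,β} = θ(γ+δ=α+β) q^{⟨β-γ,γ⟩+⟨α,β-γ⟩+|α||β|-|γ||δ|} λ^{2(|δ|-|α|)}
  Φ̄_{q²}(α|δ; λ², μ²)`, the parametric `R` matrix element. -/
def Smat {K : Type*} [Field K] (qv lam mu : K) {k : ℕ} (γ δ α β : Fin k → ℕ) : K :=
  if γ + δ = α + β then
    qv ^ (innZ (castZ β - castZ γ) (castZ γ) + innZ (castZ α) (castZ β - castZ γ) +
          (asum (castZ α) * asum (castZ β) - asum (castZ γ) * asum (castZ δ))) *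
      lam ^ (2 * (asum (castZ δ) - asum (castZ α))) *
      phiBarP (qv ^ 2) (lam ^ 2) (mu ^ 2) (castZ α) (castZ δ)
  else 0

/-- reversal `ρ(a) = (a_n, …, a_1)`. -/
def rev {n : ℕ} {M : Type*} (a : Fin n → M) : Fin n → M := fun i => a i.rev

/-- cyclic shift `σ(a) = (a_2, …, a_n, a_1)`. -/
def cyc {n : ℕ} {M : Type*} (a : Fin n → M) : Fin n → M :=
  fun i => a ⟨(i.val + 1) % n, Nat.mod_lt _ (by have := i.isLt; omega)⟩

/-- the cyclic successor on `Fin n`. -/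
def nxt {n : ℕ} (i : Fin n) : Fin n :=
  ⟨(i.val + 1) % n, Nat.mod_lt _ (by have := i.isLt; omega)⟩

/-- deletion of the `i`-th entry of an array. -/
def del {n : ℕ} (i : Fin n) (a : Fin n → ℕ) : Fin (n - 1) → ℕ :=
  fun j =>
    if (j : ℕ) < (i : ℕ) then a ⟨j, by have := j.isLt; omega⟩
    else a ⟨(j : ℕ) + 1, by have := j.isLt; omega⟩

/-- the `q²`-binomial coefficient `binom(b, c)_{q²}` as an element of `ℚ(q)`. -/
def qbinom2 (b c : ℕ) : Fq :=
  poch (q ^ 2) (q ^ 2) b / (poch (q ^ 2) (q ^ 2) (b - c) * poch (q ^ 2) (q ^ 2) c)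

/-- `ℚ(q)(z) = ℚ(q, z)`. -/
abbrev Fqz : Type := RatFunc Fq

/-- the image of `q` in `ℚ(q, z)`. -/
def qz : Fqz := RatFunc.C q

/-- the indeterminate `z` in `ℚ(q, z)`. -/
def zz : Fqz := RatFunc.X

/-- the symmetric bilinear form on the Fock space with `⟨|m⟩, |m'⟩⟩ = (q;q)_m δ_{m,m'}`. -/
def form (u v : Fock) : Fq := u.sum fun m c => c * poch q q m * v m

end KOY

/-!
`a⁺` and `a⁻` are adjoint to each other for `⟨·,·⟩` because
`(q;q)_{m+1} = (1 - q^{m+1}) (q;q)_m`, and `k` is self-adjoint because the basis `|m⟩` is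
orthogonal. Adjoints reverse products, so the adjoint of `(a⁺)^{(j-i)_+} q^m k^m (a⁻)^{(i-j)_+}`
is `(a⁺)^{(i-j)_+} q^m k^m (a⁻)^{(j-i)_+}`; since the coefficients in `G^j_i` are symmetric in
`i` and `j`, the adjoint of `G^j_i` is `G^i_j`.
-/

namespace LinearMap

section AdjointPair

variable {R M M₁ N : Type*} [CommSemiring R] [AddCommMonoid M] [Module R M]
  [AddCommMonoid M₁] [Module R M₁] [AddCommMonoid N] [Module R N]
  {B : M →ₗ[R] M →ₗ[R] N} {B' : M₁ →ₗ[R] M₁ →ₗ[R] N}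

theorem isAdjointPair_of_basis {ι ι₁ : Type*} (b : Module.Basis ι R M)
    (b₁ : Module.Basis ι₁ R M₁) {f : M →ₗ[R] M₁} {g : M₁ →ₗ[R] M}
    (h : ∀ i j, B' (f (b i)) (b₁ j) = B (b i) (g (b₁ j))) :
    IsAdjointPair B B' f g :=
  isAdjointPair_iff_comp_eq_compl₂.2 (ext_basis b b₁ h)

theorem IsAdjointPair.pow {f g : Module.End R M} (h : IsAdjointPair B B f g) (n : ℕ) :
    IsAdjointPair B B ⇑(f ^ n) ⇑(g ^ n) := by
  induction n with
  | zero => exact isAdjointPair_one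
  | succ n ih =>
    rw [pow_succ f, pow_succ' g]
    exact ih.mul h

theorem IsAdjointPair.sum {ι : Type*} (s : Finset ι) {f : ι → M → M₁} {g : ι → M₁ → M}
    (h : ∀ i ∈ s, IsAdjointPair B B' (f i) (g i)) :
    IsAdjointPair B B' (∑ i ∈ s, f i) (∑ i ∈ s, g i) := by
  induction s using Finset.cons_induction with
  | empty => exact isAdjointPair_zero
  | cons a s ha ih =>
    rw [Finset.sum_cons, Finset.sum_cons]
    exact (h a (Finset.mem_cons_self a s)).add (ih fun i hi => h i (Finset.mem_cons_of_mem hi))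

theorem IsAdjointPair.symm {B : LinearMap.BilinForm R M} (hB : B.IsSymm) {f g : M → M}
    (h : IsAdjointPair B B f g) : IsAdjointPair B B g f := fun x y => by
  rw [hB.eq, ← h, hB.eq]

end AdjointPair

end LinearMap

namespace KOY

open Finsupp
open LinearMap (IsAdjointPair)

def formBilin : LinearMap.BilinForm Fq Fock :=
  LinearMap.mk₂ Fq form
    (fun u u' v => sum_add_index' (fun _ => by ring) (fun _ _ _ => by ring))
    (fun c u v => by
      unfold form
      rw [sum_smul_index (fun _ => by ring), smul_eq_mul, mul_sum]
      exact sum_congr fun _ _ => by ring)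
    (fun u v v' => by
      unfold form
      rw [← sum_add]
      exact sum_congr fun _ _ => by simp only [Finsupp.add_apply]; ring)
    (fun c u v => by
      unfold form
      rw [smul_eq_mul, mul_sum]
      exact sum_congr fun _ _ => by simp only [Finsupp.smul_apply, smul_eq_mul]; ring)

theorem formBilin_apply (u v : Fock) : formBilin u v = form u v :=
  rfl

theorem formBilin_single_single (m m' : ℕ) (a b : Fq) :
    formBilin (single m a) (single m' b) = if m = m' then a * poch q q m * b else 0 := by
  rw [formBilin_apply, form, sum_single_index (by ring), single_apply]
  by_cases h : m = m'
  · subst h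
    simp
  · simp [h, Ne.symm h]

theorem formBilin_isSymm : formBilin.IsSymm := by
  rw [LinearMap.BilinForm.isSymm_iff, LinearMap.isSymm_iff_eq_flip]
  refine LinearMap.ext_basis (Finsupp.basisSingleOne (R := Fq)) Finsupp.basisSingleOne
    fun m m' => ?_
  simp only [coe_basisSingleOne, LinearMap.flip_apply, formBilin_single_single, @eq_comm ℕ m]
  split_ifs with h <;> simp [h]

theorem aP_single (m : ℕ) : aP (single m (1 : Fq)) = single (m + 1) 1 := by
  rw [aP, lift_apply, sum_single_index (by rw [zero_smul]), one_smul]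

theorem aM_single (m : ℕ) : aM (single m (1 : Fq)) = (1 - q ^ m) • single (m - 1) 1 := by
  rw [aM, lift_apply, sum_single_index (by rw [zero_smul]), one_smul]

theorem kO_single (m : ℕ) : kO (single m (1 : Fq)) = q ^ m • single m 1 := by
  rw [kO, lift_apply, sum_single_index (by rw [zero_smul]), one_smul]

theorem isAdjointPair_aP_aM : IsAdjointPair formBilin formBilin aP aM := by
  refine LinearMap.isAdjointPair_of_basis
    Finsupp.basisSingleOne Finsupp.basisSingleOne fun m m' => ?_
  simp only [coe_basisSingleOne, aP_single, aM_single, map_smul, smul_eq_mul,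
    formBilin_single_single]
  rcases m' with _ | m'
  · simp
  · by_cases h : m = m'
    · subst h
      simp only [Nat.add_sub_cancel, if_true, poch, Finset.prod_range_succ]
      ring
    · simp [h]

theorem isAdjointPair_aM_aP : IsAdjointPair formBilin formBilin aM aP :=
  isAdjointPair_aP_aM.symm formBilin_isSymm

theorem isAdjointPair_kO : IsAdjointPair formBilin formBilin kO kO := by
  refine LinearMap.isAdjointPair_of_basis
    Finsupp.basisSingleOne Finsupp.basisSingleOne fun m m' => ?_
  simp only [coe_basisSingleOne, kO_single, map_smul, LinearMap.smul_apply, smul_eq_mul,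
    formBilin_single_single]
  split_ifs with h <;> simp [h]

theorem isAdjointPair_GopN (i j : ℕ) :
    IsAdjointPair formBilin formBilin (GopN i j) (GopN j i) := by
  have monomial (m : ℕ) : IsAdjointPair formBilin formBilin
      ⇑(aP ^ (j - i) * (q ^ m • kO ^ m) * aM ^ (i - j))
      ⇑(aP ^ (i - j) * (q ^ m • kO ^ m) * aM ^ (j - i)) := by
    rw [mul_assoc (aP ^ (i - j))]
    exact ((isAdjointPair_aP_aM.pow _).mul ((isAdjointPair_kO.pow m).smul _)).mul
      (isAdjointPair_aM_aP.pow _)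
  unfold GopN
  rw [Nat.min_comm j i, Nat.add_comm j i, add_comm (j : ℤ), min_comm (j : ℤ),
    LinearMap.coe_smul, LinearMap.coe_smul, LinearMap.coe_sum, LinearMap.coe_sum]
  refine (IsAdjointPair.sum _ fun m _ => ?_).smul _
  rw [LinearMap.coe_smul, LinearMap.coe_smul]
  exact (monomial m).smul _

theorem Gop_natCast (i j : ℕ) : Gop i j = GopN i j := by
  simp [Gop]

/-- `⟨G^j_i u, v⟩ = ⟨u, G^i_j v⟩`. -/
theorem statement3 (i j : ℕ) (u v : Fock) :
    form (Gop i j u) v = form u (Gop j i v) := by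
  rw [Gop_natCast, Gop_natCast]
  exact isAdjointPair_GopN i j u v

end KOY
end
end

section
/- Fix integers n ≥ 3 and l ≥ 0, let α, γ ∈ B^{(n)}_l and suppose α_i = γ_i = 0 for some i ∈ {1, …, n}. Let α^{(i)}, γ^{(i)} ∈ B^{(n−1)}_l denote the arrays obtained from α, γ by deleting the i-th component. Then K^{(n,l)}(z)^γ_α = K^{(n−1,l)}(z)^{γ^{(i)}}_{α^{(i)}} in F((t)). -/
open scoped Classical

noncomputable section

namespace KOY

/-! Since `G^0_0 = 1`, a zero entry in both `α` and `γ` contributes the identity factor to the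
operator product and nothing to `⟨γ, α⟩`, so deleting it leaves every ingredient of the matrix
product formula unchanged. -/

lemma List.ofFn_comp_succAbove {α : Type*} {m : ℕ} (g : Fin (m + 1) → α) (p : Fin (m + 1)) :
    List.ofFn (g ∘ p.succAbove) = (List.ofFn g).eraseIdx p := by
  refine List.ext_getElem (by simp [List.length_eraseIdx, Nat.lt_succ_iff.mp p.isLt])
    fun j h₁ h₂ => ?_
  simp only [List.getElem_ofFn, List.getElem_eraseIdx, Function.comp_apply, Fin.succAbove,
    Fin.lt_def, Fin.val_castSucc]
  split_ifs <;> rfl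

lemma List.prod_ofFn_comp_succAbove {M : Type*} [Monoid M] {m : ℕ} (g : Fin (m + 1) → M)
    (p : Fin (m + 1)) (hp : g p = 1) :
    (List.ofFn (g ∘ p.succAbove)).prod = (List.ofFn g).prod := by
  have hlen : (p : ℕ) < (List.ofFn g).length := by rw [List.length_ofFn]; exact p.isLt
  have hp' : (List.ofFn g)[(p : ℕ)] = 1 := by rw [List.getElem_ofFn]; exact hp
  rw [List.ofFn_comp_succAbove, ← List.mul_prod_eraseIdx hlen (fun a _ => hp' ▸ Commute.one_left a),
    hp', one_mul]

lemma poch_zero {R : Type*} [CommRing R] (z a : R) : poch z a 0 = 1 := by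
  simp [poch]

lemma Gop_zero_zero : Gop 0 0 = 1 := by
  simp [Gop, GopN, poch_zero]

lemma del_eq_comp_succAbove {m : ℕ} (i : Fin (m + 1)) (a : Fin (m + 1) → ℕ) :
    del i a = a ∘ i.succAbove := by
  funext j
  simp only [del, Function.comp_apply, Fin.succAbove, Fin.lt_def, Fin.val_castSucc]
  split_ifs <;> rfl

lemma innN_comp_succAbove {m : ℕ} (i : Fin (m + 1)) (a b : Fin (m + 1) → ℕ)
    (ha : a i = 0) (hb : b i = 0) : innN (a ∘ i.succAbove) (b ∘ i.succAbove) = innN a b := by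
  unfold innN
  rw [Fin.sum_univ_succAbove _ i]
  simp only [ha, zero_mul, ite_self, Finset.sum_const_zero, zero_add]
  refine Finset.sum_congr rfl fun x _ => ?_
  rw [Fin.sum_univ_succAbove _ i]
  simp only [hb, mul_zero, ite_self, zero_add, Function.comp_apply, Fin.succAbove_lt_succAbove_iff]

lemma Kmat_comp_succAbove {m : ℕ} (l : ℕ) (α γ : Fin (m + 1) → ℕ) (i : Fin (m + 1))
    (hαi : α i = 0) (hγi : γ i = 0) :
    Kmat (m + 1) l α γ = Kmat m l (α ∘ i.succAbove) (γ ∘ i.succAbove) := by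
  have hprod : (List.ofFn fun j => Gop (α (i.succAbove j)) (γ (i.succAbove j))).prod =
      (List.ofFn fun j => Gop (α j) (γ j)).prod :=
    List.prod_ofFn_comp_succAbove (fun j => Gop (α j) (γ j)) i (by simp [hαi, hγi, Gop_zero_zero])
  simp only [Kmat, KmatPS, Function.comp_apply, innN_comp_succAbove i γ α hγi hαi, hprod]

theorem statement6_general (n l : ℕ) (α γ : Fin n → ℕ)
    (i : Fin n) (hαi : α i = 0) (hγi : γ i = 0) :
    Kmat n l α γ = Kmat (n - 1) l (del i α) (del i γ) := by
  cases n with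
  | zero => exact i.elim0
  | succ m =>
    rw [del_eq_comp_succAbove, del_eq_comp_succAbove]
    exact Kmat_comp_succAbove l α γ i hαi hγi

/-- rank reduction `K^{(n,l)}(z)^γ_α = K^{(n-1,l)}(z)^{γ^{(i)}}_{α^{(i)}}`
when `α_i = γ_i = 0`. -/
theorem statement6 (n l : ℕ) (hn : 3 ≤ n) (α γ : Fin n → ℕ)
    (hα : ∑ i, α i = l) (hγ : ∑ i, γ i = l)
    (i : Fin n) (hαi : α i = 0) (hγi : γ i = 0) :
    Kmat n l α γ = Kmat (n - 1) l (del i α) (del i γ) :=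
  statement6_general n l α γ i hαi hγi

end KOY
end
end

section
/- Fix integers n ≥ 2 and l ≥ m ≥ 0. For all α, γ ∈ B^{(n)}_l and β, δ ∈ B^{(n)}_m with γ + δ = α + β, the rational function z ↦ A^{(m,l)}(z)^{δ,γ}_{β,α} ∈ ℚ(q)(z) is regular at z = q^{m−l}, and its value there equals θ(δ ≤ α) · q^{⟨β, α−δ⟩ + ⟨α−δ, δ⟩} · binom(l,m)_{q²}^{−1} · ∏_{i=1}^{n} binom(α_i, δ_i)_{q²}. (Equivalently, the R matrix with elements R(z)^{γ,δ}_{α,β} = θ(γ+δ = α+β) A^{(m,l)}(z)^{δ,γ}_{β,α} factorizes at the special point z = q^{m−l}.) -/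
open scoped Classical

noncomputable section

namespace KOY

/-!
At `z = q^{m-l}` the first factor `Φ_{q²}(ξ̄ - γ̄ | ξ̄; q^{l-m} z, q^{-l-m} z)` of each summand
has `λ = 1`, so it vanishes unless `ξ̄ = γ̄`, where it equals `1`. The exception is `|ξ̄| > l`:
then the factor `1 - μ q^{2l} = 1 - λ` of its denominator `(μ; q²)_{|ξ̄|}` cancels against the
numerator, so the first factor stays finite, while the second factor vanishes because it
contains `(q^{2(m-l)}; q²)_j` with `j > l - m`. The value is therefore
`q^{⟨β,α⟩-⟨γ,δ⟩} Φ_{q²}(δ̄ | ᾱ; q^{-2m}, q^{-2l})`, and the reflection formula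
`(q^{-2N}; q²)_k (q²; q²)_{N-k} = (-1)^k q^{k²-k-2Nk} (q²; q²)_N` turns it into the stated
product of `q²`-binomials.
-/

open Polynomial

section HasValueAt

variable {K : Type*} [Field K] {c : K}

/-- `f` is regular at `c` with value `v`. Unlike `RatFunc.eval`, this is compatible with sums and
products without any condition on reduced denominators. -/
def HasValueAt (c : K) (f : RatFunc K) (v : K) : Prop :=
  ∃ p s : K[X], s.eval c ≠ 0 ∧
    f = algebraMap K[X] (RatFunc K) p / algebraMap K[X] (RatFunc K) s ∧ v = p.eval c / s.eval c

theorem hasValueAt_C (a : K) : HasValueAt c (RatFunc.C a) a :=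
  ⟨C a, 1, by simp, by simp [RatFunc.algebraMap_C], by simp⟩

theorem hasValueAt_X : HasValueAt c RatFunc.X c :=
  ⟨X, 1, by simp, by simp [RatFunc.algebraMap_X], by simp⟩

namespace HasValueAt

variable {f g : RatFunc K} {v w : K}

theorem denom_eval_ne_zero (h : HasValueAt c f v) : f.denom.eval c ≠ 0 := by
  obtain ⟨p, s, hs, rfl, -⟩ := h
  obtain ⟨t, ht⟩ := RatFunc.denom_div_dvd p s
  exact fun h0 => hs (by rw [ht, eval_mul, h0, zero_mul])

theorem eval_eq (h : HasValueAt c f v) : f.eval (RingHom.id K) c = v := by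
  have hden := h.denom_eval_ne_zero
  obtain ⟨p, s, hs, rfl, rfl⟩ := h
  have hs0 : s ≠ 0 := by rintro rfl; simp at hs
  have key := congrArg (eval c)
    ((RatFunc.num_mul_eq_mul_denom_iff hs0 (x := algebraMap _ _ p / algebraMap _ _ s)).mpr rfl)
  rw [eval_mul, eval_mul] at key
  rw [RatFunc.eval, eval₂_id, eval₂_id, eq_div_iff hs, div_mul_eq_mul_div, div_eq_iff hden]
  exact key

theorem congr_value (h : HasValueAt c f v) (hv : v = w) : HasValueAt c f w := hv ▸ h

theorem add (hf : HasValueAt c f v) (hg : HasValueAt c g w) : HasValueAt c (f + g) (v + w) := by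
  obtain ⟨p₁, s₁, hs₁, rfl, rfl⟩ := hf
  obtain ⟨p₂, s₂, hs₂, rfl, rfl⟩ := hg
  have h₁ : s₁ ≠ 0 := by rintro rfl; simp at hs₁
  have h₂ : s₂ ≠ 0 := by rintro rfl; simp at hs₂
  refine ⟨p₁ * s₂ + s₁ * p₂, s₁ * s₂, by simp [hs₁, hs₂], ?_, ?_⟩
  · rw [div_add_div _ _ (RatFunc.algebraMap_ne_zero h₁) (RatFunc.algebraMap_ne_zero h₂)]
    simp
  · rw [div_add_div _ _ hs₁ hs₂]; simp

theorem mul (hf : HasValueAt c f v) (hg : HasValueAt c g w) : HasValueAt c (f * g) (v * w) := by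
  obtain ⟨p₁, s₁, hs₁, rfl, rfl⟩ := hf
  obtain ⟨p₂, s₂, hs₂, rfl, rfl⟩ := hg
  exact ⟨p₁ * p₂, s₁ * s₂, by simp [hs₁, hs₂], by simp [div_mul_div_comm],
    by simp [div_mul_div_comm]⟩

theorem inv (hf : HasValueAt c f v) (hv : v ≠ 0) : HasValueAt c f⁻¹ v⁻¹ := by
  obtain ⟨p, s, hs, rfl, rfl⟩ := hf
  exact ⟨s, p, fun h => hv (by rw [h, zero_div]), by rw [inv_div], by rw [inv_div]⟩

theorem sub (hf : HasValueAt c f v) (hg : HasValueAt c g w) : HasValueAt c (f - g) (v - w) := by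
  simpa [sub_eq_add_neg] using hf.add ((hasValueAt_C (-1)).mul hg)

theorem div (hf : HasValueAt c f v) (hg : HasValueAt c g w) (hw : w ≠ 0) :
    HasValueAt c (f / g) (v / w) := by
  simpa only [div_eq_mul_inv] using hf.mul (hg.inv hw)

theorem pow (hf : HasValueAt c f v) (k : ℕ) : HasValueAt c (f ^ k) (v ^ k) := by
  induction k with
  | zero => simpa using hasValueAt_C (c := c) 1
  | succ k ih => simpa only [pow_succ] using ih.mul hf

theorem zpow (hf : HasValueAt c f v) (hv : v ≠ 0) (k : ℤ) : HasValueAt c (f ^ k) (v ^ k) := by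
  cases k with
  | ofNat k => simpa using hf.pow k
  | negSucc k => simpa using (hf.pow (k + 1)).inv (pow_ne_zero _ hv)

end HasValueAt

theorem hasValueAt_sum {ι : Type*} (s : Finset ι) {f : ι → RatFunc K} {v : ι → K}
    (h : ∀ i ∈ s, HasValueAt c (f i) (v i)) : HasValueAt c (∑ i ∈ s, f i) (∑ i ∈ s, v i) := by
  induction s using Finset.induction_on with
  | empty => simpa using hasValueAt_C (c := c) 0
  | insert i s hi ih =>
    simp only [Finset.sum_insert hi]
    exact (h i (s.mem_insert_self i)).add (ih fun j hj => h j (Finset.mem_insert_of_mem hj))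

theorem hasValueAt_prod {ι : Type*} (s : Finset ι) {f : ι → RatFunc K} {v : ι → K}
    (h : ∀ i ∈ s, HasValueAt c (f i) (v i)) : HasValueAt c (∏ i ∈ s, f i) (∏ i ∈ s, v i) := by
  induction s using Finset.induction_on with
  | empty => simpa using hasValueAt_C (c := c) 1
  | insert i s hi ih =>
    simp only [Finset.prod_insert hi]
    exact (h i (s.mem_insert_self i)).mul (ih fun j hj => h j (Finset.mem_insert_of_mem hj))

theorem hasValueAt_poch {f g : RatFunc K} {v w : K} (hf : HasValueAt c f v)
    (hg : HasValueAt c g w) (k : ℕ) : HasValueAt c (poch f g k) (poch v w k) :=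
  hasValueAt_prod _ fun j _ => by simpa using (hasValueAt_C 1).sub (hf.mul (hg.pow j))

end HasValueAt

section Poch

variable {R : Type*} [CommRing R]

theorem poch_succ (z a : R) (k : ℕ) : poch z a (k + 1) = poch z a k * (1 - z * a ^ k) :=
  Finset.prod_range_succ _ k

theorem poch_add (z a : R) (j k : ℕ) : poch z a (j + k) = poch z a j * poch (z * a ^ j) a k := by
  simp only [poch, Finset.prod_range_add, mul_assoc, pow_add]

theorem poch_succ' (z a : R) (k : ℕ) : poch z a (k + 1) = (1 - z) * poch (z * a) a k := by
  rw [add_comm, poch_add]; simp [poch]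

theorem poch_eq_zero_of_lt {z a : R} {k j : ℕ} (hj : j < k) (h : z * a ^ j = 1) :
    poch z a k = 0 :=
  Finset.prod_eq_zero (Finset.mem_range.mpr hj) (by rw [h, sub_self])

theorem poch_ne_zero [IsDomain R] {z a : R} {k : ℕ} (h : ∀ j < k, z * a ^ j ≠ 1) : poch z a k ≠ 0 :=
  Finset.prod_ne_zero_iff.mpr fun j hj => sub_ne_zero.mpr (h j (Finset.mem_range.mp hj)).symm

end Poch

section QPowers

theorem q_ne_zero : q ≠ 0 := RatFunc.X_ne_zero

theorem intDegree_q_zpow (k : ℤ) : (q ^ k).intDegree = k := by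
  have hnat (n : ℕ) : (q ^ n).intDegree = n := by
    rw [q, ← RatFunc.algebraMap_X, ← map_pow, RatFunc.intDegree_polynomial,
      Polynomial.natDegree_X_pow]
  cases k with
  | ofNat n => simpa using hnat n
  | negSucc n => rw [zpow_negSucc, RatFunc.intDegree_inv, hnat]; rfl

theorem q_zpow_eq_one_iff {k : ℤ} : q ^ k = 1 ↔ k = 0 := by
  refine ⟨fun h => ?_, fun h => by rw [h, zpow_zero]⟩
  simpa [h, RatFunc.intDegree_one, eq_comm] using intDegree_q_zpow k

theorem q_sq_pow (j : ℕ) : (q ^ 2) ^ j = q ^ (2 * j : ℤ) := by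
  rw [← pow_mul, ← zpow_natCast]; push_cast; rfl

theorem poch_q_zpow_ne_zero {e : ℤ} {k : ℕ} (h : ∀ j < k, e + 2 * j ≠ 0) :
    poch (q ^ e) (q ^ 2) k ≠ 0 :=
  poch_ne_zero fun j hj => by
    rw [q_sq_pow, ← zpow_add₀ q_ne_zero, Ne, q_zpow_eq_one_iff]; exact h j hj

theorem poch_q_sq_ne_zero (k : ℕ) : poch (q ^ 2) (q ^ 2) k ≠ 0 := by
  simpa using poch_q_zpow_ne_zero (e := 2) (k := k) fun j _ => by omega

end QPowers

section Arrays

variable {k : ℕ}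

theorem innZ_add_left (a b c : Fin k → ℤ) : innZ (a + b) c = innZ a c + innZ b c := by
  simp only [innZ, ← Finset.sum_add_distrib, Pi.add_apply, add_mul, ite_add_ite, add_zero]

theorem innZ_add_right (a b c : Fin k → ℤ) : innZ a (b + c) = innZ a b + innZ a c := by
  simp only [innZ, ← Finset.sum_add_distrib, Pi.add_apply, mul_add, ite_add_ite, add_zero]

theorem innZ_sub_left (a b c : Fin k → ℤ) : innZ (a - b) c = innZ a c - innZ b c := by
  rw [eq_sub_iff_add_eq, ← innZ_add_left, sub_add_cancel]

theorem innZ_sub_right (a b c : Fin k → ℤ) : innZ a (b - c) = innZ a b - innZ a c := by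
  rw [eq_sub_iff_add_eq, ← innZ_add_right, sub_add_cancel]

theorem innZ_zero_right (a : Fin k → ℤ) : innZ a 0 = 0 := by
  simp [innZ]

theorem natCast_innN (a b : Fin k → ℕ) : (innN a b : ℤ) = innZ (castZ a) (castZ b) := by
  simp only [innN, innZ, castZ]; push_cast; simp

theorem asum_add (a b : Fin k → ℤ) : asum (a + b) = asum a + asum b :=
  Finset.sum_add_distrib

theorem asum_sub (a b : Fin k → ℤ) : asum (a - b) = asum a - asum b :=
  Finset.sum_sub_distrib ..

theorem asum_pos {a : Fin k → ℤ} (h : ∀ i, 0 ≤ a i) (ha : a ≠ 0) : 0 < asum a := by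
  obtain ⟨i, hi⟩ := Function.ne_iff.mp ha
  exact Finset.sum_pos' (fun i _ => h i) ⟨i, Finset.mem_univ i, lt_of_le_of_ne (h i) (Ne.symm hi)⟩

theorem innZ_castSucc (a b : Fin (k + 1) → ℤ) :
    innZ a b = innZ (fun i => a i.castSucc) (fun i => b i.castSucc) +
      (∑ i : Fin k, a i.castSucc) * b (Fin.last k) := by
  simp [innZ, Fin.sum_univ_castSucc, Fin.castSucc_lt_last, Finset.sum_add_distrib,
    Finset.sum_mul, not_lt.mpr (Fin.le_last _)]

theorem asum_bar (a : Fin (k + 1) → ℕ) : asum (bar a) = ((∑ i, a i : ℕ) : ℤ) - a (Fin.last k) := by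
  change ∑ i : Fin k, (a i.castSucc : ℤ) = _
  simp [Fin.sum_univ_castSucc]

theorem innZ_castZ_sub (a b : Fin (k + 1) → ℕ) :
    innZ (castZ a - castZ b) (castZ b) =
      innZ (bar a - bar b) (bar b) + asum (bar a - bar b) * b (Fin.last k) :=
  innZ_castSucc _ _

end Arrays

section QBinomial

variable {K : Type*} [Field K]

theorem poch_zpow_neg_mul_poch {t : K} (ht : t ≠ 0) (N k : ℕ) (hk : k ≤ N) :
    poch (t ^ (-(2 * N : ℤ))) (t ^ 2) k * poch (t ^ 2) (t ^ 2) (N - k) =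
      (-1) ^ k * t ^ ((k : ℤ) * k - k - 2 * N * k) * poch (t ^ 2) (t ^ 2) N := by
  induction k with
  | zero => simp [poch]
  | succ k ih =>
    have hsq (j : ℕ) : (t ^ 2) ^ j = t ^ (2 * j : ℤ) := by
      rw [← pow_mul, ← zpow_natCast]; push_cast; rfl
    have ih' := ih (by omega)
    rw [show N - k = N - (k + 1) + 1 by omega, poch_succ] at ih'
    have hx : t ^ (-(2 * N : ℤ)) * (t ^ 2) ^ k = t ^ (2 * k - 2 * N : ℤ) := by
      rw [hsq, ← zpow_add₀ ht]; ring_nf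
    have hy : t ^ 2 * (t ^ 2) ^ (N - (k + 1)) = t ^ (2 * N - 2 * k : ℤ) := by
      rw [← pow_succ', hsq]; push_cast [show k + 1 ≤ N from hk]; ring_nf
    have hxy : t ^ (2 * k - 2 * N : ℤ) * t ^ (2 * N - 2 * k : ℤ) = 1 := by
      rw [← zpow_add₀ ht]; ring_nf; exact zpow_zero t
    have hexp : t ^ (2 * k - 2 * N : ℤ) * t ^ ((k : ℤ) * k - k - 2 * N * k) =
        t ^ (((k + 1 : ℕ) : ℤ) * (k + 1 : ℕ) - (k + 1 : ℕ) - 2 * N * (k + 1 : ℕ)) := by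
      rw [← zpow_add₀ ht]; push_cast; ring_nf
    rw [hy] at ih'
    rw [poch_succ, hx, pow_succ (-1 : K) k]
    linear_combination (-t ^ (2 * k - 2 * N : ℤ)) * ih' -
      poch (t ^ (-(2 * N : ℤ))) (t ^ 2) k * poch (t ^ 2) (t ^ 2) (N - (k + 1)) * hxy -
      (-1) ^ k * poch (t ^ 2) (t ^ 2) N * hexp

end QBinomial

section SpecialValue

theorem poch_q_neg_mul_poch_q_neg_div (k₁ k₂ d e : ℕ) :
    poch (q ^ (-(2 * ((k₁ + d : ℕ) : ℤ)))) (q ^ 2) k₁ *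
        poch (q ^ (-(2 * ((k₂ + e : ℕ) : ℤ)))) (q ^ 2) k₂ /
        poch (q ^ (-(2 * ((k₁ + k₂ + d + e : ℕ) : ℤ)))) (q ^ 2) (k₁ + k₂) =
      q ^ (2 * ((k₁ : ℤ) * e + k₁ * k₂ + d * k₂)) * qbinom2 (d + e) d /
        qbinom2 (k₁ + k₂ + d + e) (k₁ + d) := by
  have hA := poch_zpow_neg_mul_poch q_ne_zero (k₁ + d) k₁ (by omega)
  have hB := poch_zpow_neg_mul_poch q_ne_zero (k₂ + e) k₂ (by omega)
  have hC := poch_zpow_neg_mul_poch q_ne_zero (k₁ + k₂ + d + e) (k₁ + k₂) (by omega)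
  simp only [Nat.add_sub_cancel_left, show k₁ + k₂ + d + e - (k₁ + k₂) = d + e by omega] at hA hB hC
  have hpow : q ^ ((k₁ : ℤ) * k₁ - k₁ - 2 * ((k₁ + d : ℕ) : ℤ) * k₁) *
      q ^ ((k₂ : ℤ) * k₂ - k₂ - 2 * ((k₂ + e : ℕ) : ℤ) * k₂) =
      q ^ (2 * ((k₁ : ℤ) * e + k₁ * k₂ + d * k₂)) *
      q ^ (((k₁ + k₂ : ℕ) : ℤ) * (k₁ + k₂ : ℕ) - (k₁ + k₂ : ℕ) -
        2 * ((k₁ + k₂ + d + e : ℕ) : ℤ) * (k₁ + k₂ : ℕ)) := by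
    simp only [← zpow_add₀ q_ne_zero]
    congr 1; push_cast; ring
  have hP := poch_q_sq_ne_zero
  rw [eq_div_of_mul_eq (hP _) hA, eq_div_of_mul_eq (hP _) hB, eq_div_of_mul_eq (hP _) hC,
    pow_add (-1 : Fq) k₁ k₂, qbinom2, qbinom2,
    show k₁ + k₂ + d + e - (k₁ + d) = k₂ + e by omega, Nat.add_sub_cancel_left]
  field_simp
  rw [div_eq_div_iff (by simp [hP, zpow_ne_zero _ q_ne_zero]) (by simp [hP])]
  linear_combination (poch (q ^ 2) (q ^ 2) (k₁ + d) * poch (q ^ 2) (q ^ 2) (k₂ + e) *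
    poch (q ^ 2) (q ^ 2) (d + e) * poch (q ^ 2) (q ^ 2) d * poch (q ^ 2) (q ^ 2) e *
      poch (q ^ 2) (q ^ 2) (k₁ + k₂ + d + e)) * hpow

theorem phiP_q_sq_neg_eq (l m a d : ℕ) {k : ℕ} (g b : Fin k → ℤ)
    (hgb : ∀ i, 0 ≤ g i ∧ g i ≤ b i) (hb : asum b + a = l) (hg : asum g + d = m) (hda : d ≤ a) :
    phiP (q ^ 2) (q ^ (-(2 * m : ℤ))) (q ^ (-(2 * l : ℤ))) g b =
      q ^ (2 * innZ (b - g) g + 2 * d * (asum b - asum g)) * (qbinom2 l m)⁻¹ * qbinom2 a d *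
        ∏ i, qbinom2 (b i).toNat (g i).toNat := by
  have hprod (i : Fin k) : poch (q ^ 2) (q ^ 2) (b i).toNat /
      (poch (q ^ 2) (q ^ 2) (b i - g i).toNat * poch (q ^ 2) (q ^ 2) (g i).toNat) =
        qbinom2 (b i).toNat (g i).toNat := by
    rw [qbinom2, show (b i - g i).toNat = (b i).toNat - (g i).toNat by have := hgb i; omega]
  have hg₀ : 0 ≤ asum g := Finset.sum_nonneg fun i _ => (hgb i).1
  have hbg₀ : 0 ≤ asum (b - g) := Finset.sum_nonneg fun i _ => sub_nonneg.mpr (hgb i).2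
  rw [asum_sub] at hbg₀
  obtain ⟨k₁, hk₁⟩ : ∃ k₁ : ℕ, asum g = k₁ := ⟨(asum g).toNat, by omega⟩
  obtain ⟨k₂, hk₂⟩ : ∃ k₂ : ℕ, asum b - asum g = k₂ := ⟨(asum b - asum g).toNat, by omega⟩
  obtain ⟨e, rfl⟩ : ∃ e, a = d + e := ⟨a - d, by omega⟩
  obtain rfl : m = k₁ + d := by omega
  obtain rfl : l = k₁ + k₂ + d + e := by omega
  have hratio : q ^ (-(2 * ((k₁ + k₂ + d + e : ℕ) : ℤ))) / q ^ (-(2 * ((k₁ + d : ℕ) : ℤ))) =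
      q ^ (-(2 * ((k₂ + e : ℕ) : ℤ))) := by
    rw [← zpow_sub₀ q_ne_zero]; push_cast; ring_nf
  unfold phiP phiBarP
  rw [if_pos hgb, Finset.prod_congr rfl fun i _ => hprod i, hk₁, show asum b = k₁ + k₂ by omega,
    hratio, add_sub_cancel_left, ← Nat.cast_add]
  simp only [Int.toNat_natCast]
  rw [poch_q_neg_mul_poch_q_neg_div, ← zpow_natCast q 2, ← zpow_mul, ← zpow_mul]
  rw [show 2 * innZ (b - g) g + 2 * d * k₂ = ((2 : ℕ) : ℤ) * innZ (b - g) g +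
      -(2 * ((k₂ + e : ℕ) : ℤ)) * k₁ + 2 * ((k₁ : ℤ) * e + k₁ * k₂ + d * k₂) by push_cast; ring,
    zpow_add₀ q_ne_zero, zpow_add₀ q_ne_zero]
  ring

end SpecialValue

section PhiFacts

variable {K : Type*} [Field K]

theorem phiP_eq_zero_of_not_le (qv lam mu : K) {k : ℕ} {g b : Fin k → ℤ}
    (h : ¬ ∀ i, 0 ≤ g i ∧ g i ≤ b i) : phiP qv lam mu g b = 0 := by
  rw [phiP, phiBarP, if_neg h, mul_zero]

theorem phiP_one_of_asum_pos (qv mu : K) {k : ℕ} {g : Fin k → ℤ} (b : Fin k → ℤ)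
    (hg : 0 < asum g) : phiP qv 1 mu g b = 0 := by
  by_cases h : ∀ i, 0 ≤ g i ∧ g i ≤ b i
  · rw [phiP, phiBarP, if_pos h, poch_eq_zero_of_lt (j := 0) (by omega) (by simp)]
    simp
  · exact phiP_eq_zero_of_not_le _ _ _ h

theorem phiP_one_zero {qv mu : K} (hqv : ∀ j, poch qv qv j ≠ 0) {k : ℕ} {b : Fin k → ℤ}
    (hb : ∀ i, 0 ≤ b i) (hden : poch mu qv (asum b).toNat ≠ 0) : phiP qv 1 mu 0 b = 1 := by
  rw [phiP, phiBarP, if_pos fun i => ⟨le_rfl, hb i⟩]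
  have hsum : asum (0 : Fin k → ℤ) = 0 := Finset.sum_const_zero
  have hpoch (z a : K) : poch z a 0 = 1 := Finset.prod_range_zero _
  simp only [innZ_zero_right, hsum, Pi.zero_apply, sub_zero, div_one, zpow_zero, Int.toNat_zero,
    hpoch, mul_one, one_mul, div_self hden, div_self (hqv _), Finset.prod_const_one]

theorem phiP_q_sq_neg_eq_zero {l m : ℕ} (hml : m ≤ l) {k : ℕ} {g b : Fin k → ℤ}
    (h : (l : ℤ) - m < asum b - asum g) :
    phiP (q ^ 2) (q ^ (-(2 * m : ℤ))) (q ^ (-(2 * l : ℤ))) g b = 0 := by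
  by_cases hgb : ∀ i, 0 ≤ g i ∧ g i ≤ b i
  · have hzero :
        poch (q ^ (-(2 * l : ℤ)) / q ^ (-(2 * m : ℤ))) (q ^ 2) (asum b - asum g).toNat = 0 := by
      refine poch_eq_zero_of_lt (j := l - m) (by omega) ?_
      rw [q_sq_pow, ← zpow_sub₀ q_ne_zero, ← zpow_add₀ q_ne_zero, q_zpow_eq_one_iff]
      push_cast [hml]; ring
    rw [phiP, phiBarP, if_pos hgb, hzero]
    simp
  · exact phiP_eq_zero_of_not_le _ _ _ hgb

end PhiFacts

section Regularity

variable {c : Fq}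

theorem hasValueAt_qz_sq : HasValueAt c (qz ^ 2) (q ^ 2) := (hasValueAt_C q).pow 2

theorem hasValueAt_qz_zpow (e : ℤ) : HasValueAt c (qz ^ e) (q ^ e) :=
  (hasValueAt_C q).zpow q_ne_zero e

theorem hasValueAt_prod_poch_div {k : ℕ} (g b : Fin k → ℤ) :
    HasValueAt c (∏ i, poch (qz ^ 2) (qz ^ 2) (b i).toNat /
        (poch (qz ^ 2) (qz ^ 2) (b i - g i).toNat * poch (qz ^ 2) (qz ^ 2) (g i).toNat))
      (∏ i, poch (q ^ 2) (q ^ 2) (b i).toNat /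
        (poch (q ^ 2) (q ^ 2) (b i - g i).toNat * poch (q ^ 2) (q ^ 2) (g i).toNat)) := by
  have hpoch (j : ℕ) := hasValueAt_poch (c := c) hasValueAt_qz_sq hasValueAt_qz_sq j
  exact hasValueAt_prod _ fun i _ => (hpoch _).div ((hpoch _).mul (hpoch _))
    (mul_ne_zero (poch_q_sq_ne_zero _) (poch_q_sq_ne_zero _))

theorem hasValueAt_phiP {lam mu : Fqz} {lv mv : Fq} (hl : HasValueAt c lam lv)
    (hm : HasValueAt c mu mv) (hlv : lv ≠ 0) (hmv : mv ≠ 0) {k : ℕ} (g b : Fin k → ℤ)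
    (hden : poch mv (q ^ 2) (asum b).toNat ≠ 0) :
    HasValueAt c (phiP (qz ^ 2) lam mu g b) (phiP (q ^ 2) lv mv g b) := by
  unfold phiP phiBarP
  split_ifs
  · exact ((hasValueAt_qz_sq.zpow (pow_ne_zero 2 q_ne_zero) _).mul
      ((hm.div hl hlv).zpow (div_ne_zero hmv hlv) _)).mul
      ((((hasValueAt_poch hl hasValueAt_qz_sq _).mul
        (hasValueAt_poch (hm.div hl hlv) hasValueAt_qz_sq _)).div
        (hasValueAt_poch hm hasValueAt_qz_sq _) hden).mul (hasValueAt_prod_poch_div g b))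
  · simpa using hasValueAt_C (c := c) 0

theorem hasValueAt_qz_zpow_mul_zz (e d : ℤ) : HasValueAt (q ^ d) (qz ^ e * zz) (q ^ (e + d)) :=
  ((hasValueAt_qz_zpow e).mul hasValueAt_X).congr_value (zpow_add₀ q_ne_zero e d).symm

theorem hasValueAt_qz_zpow_mul_zz_inv (e d : ℤ) :
    HasValueAt (q ^ d) (qz ^ e * zz⁻¹) (q ^ (e - d)) :=
  ((hasValueAt_qz_zpow e).mul (hasValueAt_X.inv (zpow_ne_zero d q_ne_zero))).congr_value
    (by rw [zpow_sub₀ q_ne_zero, div_eq_mul_inv])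

theorem qz_zpow_mul_zz_ne_one (e : ℤ) : qz ^ e * zz ≠ 1 := by
  intro h
  have hX : RatFunc.X = RatFunc.C (q ^ (-e)) := by
    rw [map_zpow₀, zpow_neg]
    exact eq_inv_of_mul_eq_one_right h
  rw [← RatFunc.algebraMap_X, ← RatFunc.algebraMap_C] at hX
  exact Polynomial.X_ne_C _ (RatFunc.algebraMap_injective Fq hX)

theorem exists_hasValueAt_phiP_of_lt (l m : ℕ) {k : ℕ} {g b : Fin k → ℤ} (hg : 0 < asum g)
    (hb : (l : ℤ) < asum b) :
    ∃ v, HasValueAt (q ^ ((m : ℤ) - l))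
      (phiP (qz ^ 2) (qz ^ ((l : ℤ) - m) * zz) (qz ^ (-(m : ℤ) - l) * zz) g b) v := by
  by_cases hgb : ∀ i, 0 ≤ g i ∧ g i ≤ b i
  swap
  · exact ⟨0, by simpa [phiP_eq_zero_of_not_le _ _ _ hgb] using hasValueAt_C (K := Fq) 0⟩
  have hlam : HasValueAt (q ^ ((m : ℤ) - l)) (qz ^ ((l : ℤ) - m) * zz) 1 :=
    (hasValueAt_qz_zpow_mul_zz _ _).congr_value (by simp)
  have hmu : HasValueAt (q ^ ((m : ℤ) - l)) (qz ^ (-(m : ℤ) - l) * zz) (q ^ (-(2 * l : ℤ))) :=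
    (hasValueAt_qz_zpow_mul_zz _ _).congr_value (by ring_nf)
  have hpole : qz ^ (-(m : ℤ) - l) * zz * (qz ^ 2) ^ l = qz ^ ((l : ℤ) - m) * zz := by
    have hqz : qz ≠ 0 := by simpa [qz] using q_ne_zero
    rw [mul_right_comm, ← zpow_natCast, ← zpow_natCast, ← zpow_mul, ← zpow_add₀ hqz]
    ring_nf
  obtain ⟨s, hs⟩ : ∃ s, (asum g).toNat = s + 1 := ⟨(asum g).toNat - 1, by omega⟩
  obtain ⟨r, hr⟩ : ∃ r, (asum b).toNat = l + (r + 1) := ⟨(asum b).toNat - l - 1, by omega⟩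
  rw [phiP, phiBarP, if_pos hgb, hs, hr, poch_succ', poch_add, poch_succ', hpole]
  have hne : 1 - qz ^ ((l : ℤ) - m) * zz ≠ 0 := sub_ne_zero.mpr (qz_zpow_mul_zz_ne_one _).symm
  rw [mul_assoc (1 - _), mul_left_comm (poch _ _ l), mul_div_mul_left _ _ hne]
  have hq2 := hasValueAt_qz_sq (c := q ^ ((m : ℤ) - l))
  have hratio := hmu.div hlam one_ne_zero
  have hlam2 := hlam.mul hq2
  refine ⟨_, ((hq2.zpow (pow_ne_zero 2 q_ne_zero) _).mul
    (hratio.zpow (by simpa using zpow_ne_zero _ q_ne_zero) _)).mul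
    ((((hasValueAt_poch hlam2 hq2 s).mul (hasValueAt_poch hratio hq2 _)).div
      ((hasValueAt_poch hmu hq2 l).mul (hasValueAt_poch hlam2 hq2 r)) ?_).mul
      (hasValueAt_prod_poch_div g b))⟩
  refine mul_ne_zero (poch_q_zpow_ne_zero fun j hj => by omega) ?_
  simpa using poch_q_sq_ne_zero r

end Regularity

section Summand

variable {l m : ℕ} {k : ℕ} {G D A : Fin k → ℤ}

theorem hasValueAt_summand (hml : m ≤ l) (hG : ∀ i, 0 ≤ G i) (hGl : asum G ≤ l)
    (hAl : asum A ≤ l) (hDGA : asum D + asum G ≤ asum A + m) (ξ : Fin k → ℤ) :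
    HasValueAt (q ^ ((m : ℤ) - l))
      (phiP (qz ^ 2) (qz ^ ((l : ℤ) - m) * zz) (qz ^ (-(m : ℤ) - l) * zz) (ξ - G) ξ *
        phiP (qz ^ 2) (qz ^ (-(m : ℤ) - l) * zz⁻¹) (qz ^ (-(2 * l : ℤ))) (D + G - ξ) A)
      (if ξ = G then phiP (q ^ 2) (q ^ (-(2 * m : ℤ))) (q ^ (-(2 * l : ℤ))) D A else 0) := by
  have hq (e : ℤ) : q ^ e ≠ 0 := zpow_ne_zero e q_ne_zero
  have hden {b : Fin k → ℤ} (hb : asum b ≤ l) :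
      poch (q ^ (-(2 * l : ℤ))) (q ^ 2) (asum b).toNat ≠ 0 :=
    poch_q_zpow_ne_zero fun j hj => by omega
  have hlam : HasValueAt (q ^ ((m : ℤ) - l)) (qz ^ ((l : ℤ) - m) * zz) 1 :=
    (hasValueAt_qz_zpow_mul_zz _ _).congr_value (by simp)
  have hmu : HasValueAt (q ^ ((m : ℤ) - l)) (qz ^ (-(m : ℤ) - l) * zz) (q ^ (-(2 * l : ℤ))) :=
    (hasValueAt_qz_zpow_mul_zz _ _).congr_value (by ring_nf)
  have hsecond := hasValueAt_phiP
    ((hasValueAt_qz_zpow_mul_zz_inv (-(m : ℤ) - l) ((m : ℤ) - l)).congr_value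
      (show _ = q ^ (-(2 * m : ℤ)) by ring_nf))
    (hasValueAt_qz_zpow _) (hq _) (hq _) (D + G - ξ) A (hden hAl)
  by_cases hξ : ξ = G
  · subst hξ
    rw [if_pos rfl, add_sub_cancel_right]
    rw [add_sub_cancel_right] at hsecond
    refine ((hasValueAt_phiP hlam hmu one_ne_zero (hq _) (ξ - ξ) ξ (hden hGl)).mul
      hsecond).congr_value ?_
    rw [sub_self, phiP_one_zero (fun j => poch_q_sq_ne_zero j) hG (hden hGl), one_mul]
  rw [if_neg hξ]
  by_cases hcond : ∀ i, 0 ≤ (ξ - G) i ∧ (ξ - G) i ≤ ξ i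
  swap
  · simpa [phiP_eq_zero_of_not_le _ _ _ hcond] using hasValueAt_C (K := Fq) 0
  have hpos : 0 < asum (ξ - G) := asum_pos (fun i => (hcond i).1) (sub_ne_zero.mpr hξ)
  rcases le_or_gt (asum ξ) l with hξl | hξl
  · refine ((hasValueAt_phiP hlam hmu one_ne_zero (hq _) (ξ - G) ξ (hden hξl)).mul
      hsecond).congr_value ?_
    rw [phiP_one_of_asum_pos _ _ _ hpos, zero_mul]
  · obtain ⟨v, hv⟩ := exists_hasValueAt_phiP_of_lt l m hpos hξl
    refine (hv.mul hsecond).congr_value ?_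
    rw [phiP_q_sq_neg_eq_zero hml, mul_zero]
    rw [asum_sub, asum_add]
    omega

end Summand

section Amat

variable {N l m : ℕ} {α γ β δ : Fin (N + 1) → ℕ}

theorem hasValueAt_Amat (hml : m ≤ l) (hα : ∑ i, α i = l) (hγ : ∑ i, γ i = l)
    (hδ : ∑ i, δ i = m) (hc : γ + δ = α + β) :
    HasValueAt (q ^ ((m : ℤ) - l)) (Amat qz zz m l δ γ β α)
      (q ^ ((innN β α : ℤ) - innN γ δ) *
        phiP (q ^ 2) (q ^ (-(2 * m : ℤ))) (q ^ (-(2 * l : ℤ))) (bar δ) (bar α)) := by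
  have hlast : γ (Fin.last N) + δ (Fin.last N) = α (Fin.last N) + β (Fin.last N) :=
    congrFun hc (Fin.last N)
  have hbarα := asum_bar α
  have hbarγ := asum_bar γ
  have hbarδ := asum_bar δ
  rw [hα] at hbarα
  rw [hγ] at hbarγ
  rw [hδ] at hbarδ
  have hmem : bar γ ∈ Finset.Icc 0 (bar δ + bar γ) :=
    Finset.mem_Icc.mpr ⟨fun i => Int.natCast_nonneg _,
      fun i => le_add_of_nonneg_left (Int.natCast_nonneg _)⟩
  unfold Amat
  refine (hasValueAt_qz_zpow _).mul ((hasValueAt_sum _ fun ξ _ =>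
    hasValueAt_summand (G := bar γ) (D := bar δ) (A := bar α) hml (fun i => Int.natCast_nonneg _)
      (by omega) (by omega) (by omega) ξ).congr_value ?_)
  rw [Finset.sum_ite_eq', if_pos hmem]

theorem q_zpow_mul_phiP_bar_eq (hml : m ≤ l) (hα : ∑ i, α i = l) (hδ : ∑ i, δ i = m)
    (hc : γ + δ = α + β) :
    q ^ ((innN β α : ℤ) - innN γ δ) *
        phiP (q ^ 2) (q ^ (-(2 * m : ℤ))) (q ^ (-(2 * l : ℤ))) (bar δ) (bar α) =
      (if ∀ i, δ i ≤ α i then 1 else 0) *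
        q ^ (innZ (castZ β) (castZ α - castZ δ) + innZ (castZ α - castZ δ) (castZ δ)) *
        (qbinom2 l m)⁻¹ * ∏ i, qbinom2 (α i) (δ i) := by
  have hbarα := asum_bar α
  have hbarδ := asum_bar δ
  rw [hα] at hbarα
  rw [hδ] at hbarδ
  by_cases hda : ∀ i, δ i ≤ α i
  · have hbar : ∀ i, 0 ≤ bar δ i ∧ bar δ i ≤ bar α i := fun i =>
      ⟨Int.natCast_nonneg _, Int.ofNat_le.mpr (hda _)⟩
    have hprod : ∏ i, qbinom2 (α i) (δ i) = (∏ i, qbinom2 (bar α i).toNat (bar δ i).toNat) *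
        qbinom2 (α (Fin.last N)) (δ (Fin.last N)) := by
      rw [Fin.prod_univ_castSucc]; rfl
    have hγ : castZ γ = castZ α + castZ β - castZ δ := funext fun i => by
      have := congrFun hc i
      simp only [castZ, Pi.add_apply, Pi.sub_apply] at this ⊢
      omega
    have hsplit := innZ_castZ_sub α δ
    rw [asum_sub] at hsplit
    have hexp : (innN β α : ℤ) - innN γ δ +
        (2 * innZ (bar α - bar δ) (bar δ) + 2 * δ (Fin.last N) * (asum (bar α) - asum (bar δ))) =
        innZ (castZ β) (castZ α - castZ δ) + innZ (castZ α - castZ δ) (castZ δ) := by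
      rw [natCast_innN, natCast_innN, hγ]
      simp only [innZ_sub_left, innZ_add_left, innZ_sub_right] at hsplit ⊢
      linarith
    rw [if_pos hda, one_mul, phiP_q_sq_neg_eq l m (α (Fin.last N)) (δ (Fin.last N)) _ _ hbar
      (by omega) (by omega) (hda _), hprod, ← hexp,
      zpow_add₀ q_ne_zero ((innN β α : ℤ) - innN γ δ)]
    ring
  · rw [if_neg hda, zero_mul, zero_mul, zero_mul]
    by_cases hbar : ∀ i, 0 ≤ bar δ i ∧ bar δ i ≤ bar α i
    · have hlast : α (Fin.last N) < δ (Fin.last N) := by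
        contrapose! hda
        refine Fin.lastCases hda fun i => ?_
        exact Int.ofNat_le.mp (hbar i).2
      rw [phiP_q_sq_neg_eq_zero hml (by omega), mul_zero]
    · rw [phiP_eq_zero_of_not_le _ _ _ hbar, mul_zero]

end Amat

theorem statement13_general (n l m : ℕ) (hn : 2 ≤ n) (hlm : m ≤ l) (α γ β δ : Fin n → ℕ)
    (hα : ∑ i, α i = l) (hγ : ∑ i, γ i = l) (hδ : ∑ i, δ i = m)
    (hc : γ + δ = α + β) :
    Polynomial.eval (q ^ ((m : ℤ) - l)) (Amat qz zz m l δ γ β α).denom ≠ 0 ∧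
      RatFunc.eval (RingHom.id Fq) (q ^ ((m : ℤ) - l)) (Amat qz zz m l δ γ β α) =
        (if ∀ i, δ i ≤ α i then 1 else 0) *
          q ^ (innZ (castZ β) (castZ α - castZ δ) + innZ (castZ α - castZ δ) (castZ δ)) *
          (qbinom2 l m)⁻¹ * ∏ i, qbinom2 (α i) (δ i) := by
  obtain ⟨N, rfl⟩ : ∃ N, n = N + 1 := ⟨n - 1, by omega⟩
  have h := hasValueAt_Amat hlm hα hγ hδ hc
  rw [q_zpow_mul_phiP_bar_eq hlm hα hδ hc] at h
  exact ⟨h.denom_eval_ne_zero, h.eval_eq⟩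

/-- factorization of `R` at the special point `z = q^{m-l}` (for `l ≥ m`):
the rational function `A^{(m,l)}(z)^{δ,γ}_{β,α}` is regular at `z = q^{m-l}` and its value
there is `θ(δ ≤ α) q^{⟨β,α-δ⟩+⟨α-δ,δ⟩} binom(l,m)_{q²}⁻¹ ∏ᵢ binom(αᵢ,δᵢ)_{q²}`. -/
theorem statement13 (n l m : ℕ) (hn : 2 ≤ n) (hlm : m ≤ l) (α γ β δ : Fin n → ℕ)
    (hα : ∑ i, α i = l) (hγ : ∑ i, γ i = l) (hβ : ∑ i, β i = m) (hδ : ∑ i, δ i = m)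
    (hc : γ + δ = α + β) :
    Polynomial.eval (q ^ ((m : ℤ) - l)) (Amat qz zz m l δ γ β α).denom ≠ 0 ∧
      RatFunc.eval (RingHom.id Fq) (q ^ ((m : ℤ) - l)) (Amat qz zz m l δ γ β α) =
        (if ∀ i, δ i ≤ α i then 1 else 0) *
          q ^ (innZ (castZ β) (castZ α - castZ δ) + innZ (castZ α - castZ δ) (castZ δ)) *
          (qbinom2 l m)⁻¹ * ∏ i, qbinom2 (α i) (δ i) :=
  statement13_general n l m hn hlm α γ β δ hα hγ hδ hc

end KOY
end
end
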